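/- arXiv:2002.10035 — 2 statements merged into one kernel-verified Lean document; each statement's English description precedes it below -/
import Mathlib

section
/- Let q be a prime power, let k ≤ n1 and k ≤ n2 be positive integers. Let 𝒰 ⊆ F_q^{k×n1} be an SC-representation set of cardinality N1 such that the set {im(U) : U ∈ 𝒰} of row spaces forms an (n1, N1, d1, k)_q constant-dimension code, and let ℳ ⊆ F_q^{k×n2} be a linear rank-metric code with N2 elements whose minimum rank distance is d2 (i.e. every nonzero element of the subspace ℳ has rank at least d2). Then the set C = { im(U|M) : U ∈ 𝒰, M ∈ ℳ } of subspaces of F_q^{n1+n2} consists of N1·N2 distinct k-dimensional subspaces whose pairwise subspace distance is at least min{d1, 2d2}; that is, C is an (n1+n2, N1·N2, min{d1,2d2}, k)_q constant-dimension code. -/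
/-- The subspace distance `d_S(U,W) = 2·dim(U+W) − dim U − dim W` between two
subspaces of an `F`-vector space. -/
noncomputable def subspaceDist {F V : Type*} [Field F] [AddCommGroup V] [Module F V]
    (U W : Submodule F V) : ℕ :=
  2 * Module.finrank F ↥(U ⊔ W) - Module.finrank F ↥U - Module.finrank F ↥W

/-- The row space `im(A)` of a matrix `A`, i.e. the span of its rows. -/
def rowSpace {F : Type*} [Field F] {k n : ℕ} (A : Matrix (Fin k) (Fin n) F) :
    Submodule F (Fin n → F) :=
  Submodule.span F (Set.range fun i : Fin k => A i)

/-- Horizontal concatenation `(U | M)` of two matrices with the same number of rows. -/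
def hcat {F : Type*} [Field F] {k n1 n2 : ℕ} (U : Matrix (Fin k) (Fin n1) F)
    (M : Matrix (Fin k) (Fin n2) F) : Matrix (Fin k) (Fin (n1 + n2)) F :=
  Matrix.of fun i => Fin.append (U i) (M i)

/-- The projection of `F^(n1+n2)` onto the first `n1` coordinates. -/
noncomputable def proj1 (F : Type*) [Field F] (n1 n2 : ℕ) :
    (Fin (n1 + n2) → F) →ₗ[F] (Fin n1 → F) :=
  LinearMap.funLeft F F (Fin.castAdd n2)

section Helpers
variable {F : Type*} [Field F] {k n n1 n2 : ℕ}

lemma proj1_append (u : Fin n1 → F) (m : Fin n2 → F) :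
    proj1 F n1 n2 (Fin.append u m) = u := by
  funext j
  simp [proj1, LinearMap.funLeft_apply, Fin.append_left]

/-- `v ↦ (0 | v)` as a linear map. -/
def appendZero (F : Type*) [Field F] (n1 n2 : ℕ) :
    (Fin n2 → F) →ₗ[F] (Fin (n1 + n2) → F) where
  toFun v := Fin.append 0 v
  map_add' v w := by
    funext x
    refine Fin.addCases (fun i => ?_) (fun i => ?_) x <;>
      simp [Fin.append_left, Fin.append_right]
  map_smul' c v := by
    funext x
    refine Fin.addCases (fun i => ?_) (fun i => ?_) x <;>
      simp [Fin.append_left, Fin.append_right]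

lemma appendZero_inj : Function.Injective (appendZero F n1 n2) := by
  intro v w h
  funext i
  have := congrFun h (Fin.natAdd n1 i)
  simpa [appendZero, Fin.append_right] using this

lemma append_sub (a c : Fin n1 → F) (b d : Fin n2 → F) :
    Fin.append a b - Fin.append c d = Fin.append (a - c) (b - d) := by
  funext x
  refine Fin.addCases (fun i => ?_) (fun i => ?_) x <;>
    simp [Fin.append_left, Fin.append_right]

lemma map_proj1_rowSpace (U : Matrix (Fin k) (Fin n1) F) (M : Matrix (Fin k) (Fin n2) F) :
    (rowSpace (hcat U M)).map (proj1 F n1 n2) = rowSpace U := by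
  unfold rowSpace
  rw [Submodule.map_span, ← Set.range_comp]
  have : (proj1 F n1 n2) ∘ (fun i : Fin k => (hcat U M) i) = fun i : Fin k => U i := by
    funext i
    exact proj1_append (U i) (M i)
  rw [this]

lemma finrank_rowSpace (A : Matrix (Fin k) (Fin n) F) :
    Module.finrank F (rowSpace A) = A.rank :=
  (A.rank_eq_finrank_span_row).symm

lemma finrank_rowSpace_hcat {U : Matrix (Fin k) (Fin n1) F} (hU : U.rank = k)
    (M : Matrix (Fin k) (Fin n2) F) :
    Module.finrank F (rowSpace (hcat U M)) = k := by
  refine le_antisymm ?_ ?_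
  · rw [finrank_rowSpace]
    exact (hcat U M).rank_le_height
  · calc k = U.rank := hU.symm
    _ = Module.finrank F (rowSpace U) := (finrank_rowSpace U).symm
    _ = Module.finrank F ((rowSpace (hcat U M)).map (proj1 F n1 n2)) := by
        rw [map_proj1_rowSpace]
    _ ≤ Module.finrank F (rowSpace (hcat U M)) :=
        Submodule.finrank_map_le _ _

lemma sup_finrank_ge {U : Matrix (Fin k) (Fin n1) F} (hU : U.rank = k)
    (M1 M2 : Matrix (Fin k) (Fin n2) F) :
    k + (M2 - M1).rank ≤
      Module.finrank F ↥(rowSpace (hcat U M1) ⊔ rowSpace (hcat U M2)) := by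
  set W := rowSpace (hcat U M1) ⊔ rowSpace (hcat U M2) with hW
  set f := (proj1 F n1 n2).domRestrict W with hf
  have hrn : Module.finrank F W =
      Module.finrank F (LinearMap.range f) + Module.finrank F (LinearMap.ker f) :=
    (LinearMap.finrank_range_add_finrank_ker f).symm
  have hrange : Module.finrank F (LinearMap.range f) = k := by
    rw [hf, LinearMap.range_domRestrict, hW, Submodule.map_sup,
      map_proj1_rowSpace, map_proj1_rowSpace, sup_idem, finrank_rowSpace U, hU]
  -- the kernel contains a copy of the row space of `M2 - M1`
  set T := (rowSpace (M2 - M1)).map (appendZero F n1 n2) with hT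
  have hTrank : Module.finrank F T = (M2 - M1).rank := by
    rw [hT, ← finrank_rowSpace (M2 - M1)]
    exact (Submodule.equivMapOfInjective _ appendZero_inj _).symm.finrank_eq
  have hTle : T ≤ W ⊓ LinearMap.ker (proj1 F n1 n2) := by
    rw [hT]
    unfold rowSpace
    rw [Submodule.map_span, ← Set.range_comp]
    rw [Submodule.span_le]
    rintro _ ⟨i, rfl⟩
    simp only [Function.comp_apply, SetLike.mem_coe, Submodule.mem_inf]
    have heq : (appendZero F n1 n2) ((M2 - M1) i)
        = Fin.append (U i) (M2 i) - Fin.append (U i) (M1 i) := by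
      show Fin.append (0 : Fin n1 → F) ((M2 - M1) i) = _
      rw [append_sub, sub_self]
      congr 1
    constructor
    · rw [heq]
      exact sub_mem
        ((le_sup_right : rowSpace (hcat U M2) ≤ W)
          (Submodule.subset_span ⟨i, rfl⟩))
        ((le_sup_left : rowSpace (hcat U M1) ≤ W)
          (Submodule.subset_span ⟨i, rfl⟩))
    · rw [LinearMap.mem_ker]
      exact proj1_append _ _
  have hker : (M2 - M1).rank ≤ Module.finrank F (LinearMap.ker f) := by
    have h1 : Module.finrank F (LinearMap.ker f) =
        Module.finrank F ↥(W ⊓ LinearMap.ker (proj1 F n1 n2)) := by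
      rw [hf, LinearMap.ker_domRestrict, ← Submodule.finrank_map_subtype_eq W,
        Submodule.map_comap_subtype]
    rw [h1, ← hTrank]
    exact Submodule.finrank_mono hTle
  omega

end Helpers

section Helpers2
variable {F : Type*} [Field F] {k n n1 n2 : ℕ}

lemma hcat_inj_right {U : Matrix (Fin k) (Fin n1) F} (hU : U.rank = k)
    {M1 M2 : Matrix (Fin k) (Fin n2) F}
    (h : rowSpace (hcat U M1) = rowSpace (hcat U M2)) : M1 = M2 := by
  have h1 := sup_finrank_ge hU M1 M2
  rw [h, sup_idem, finrank_rowSpace_hcat hU] at h1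
  have hr : (M2 - M1).rank = 0 := by omega
  have hD : M2 - M1 = 0 := by
    have h2 : Module.finrank F (rowSpace (M2 - M1)) = 0 := by
      rw [finrank_rowSpace]; exact hr
    have h3 : rowSpace (M2 - M1) = ⊥ := Submodule.finrank_eq_zero.mp h2
    ext i j
    have hmem : (M2 - M1) i ∈ rowSpace (M2 - M1) := Submodule.subset_span ⟨i, rfl⟩
    rw [h3, Submodule.mem_bot] at hmem
    simpa [Matrix.sub_apply] using congrFun hmem j
  exact (sub_eq_zero.mp hD).symm

lemma rowSpace_proj {U : Matrix (Fin k) (Fin n1) F} {M1 M2 : Matrix (Fin k) (Fin n2) F}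
    {U2 : Matrix (Fin k) (Fin n1) F}
    (h : rowSpace (hcat U M1) = rowSpace (hcat U2 M2)) : rowSpace U = rowSpace U2 := by
  rw [← map_proj1_rowSpace U M1, ← map_proj1_rowSpace U2 M2, h]

end Helpers2
theorem statement0 (q k n1 n2 N1 N2 d1 d2 : ℕ) (hq : IsPrimePow q)
    (F : Type) [Field F] [Fintype F] (hcard : Fintype.card F = q)
    (hk : 0 < k) (hkn1 : k ≤ n1) (hkn2 : k ≤ n2)
    (𝒰 : Set (Matrix (Fin k) (Fin n1) F))
    (hUrank : ∀ U ∈ 𝒰, U.rank = k)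
    (hUinj : ∀ U1 ∈ 𝒰, ∀ U2 ∈ 𝒰, U1 ≠ U2 → rowSpace U1 ≠ rowSpace U2)
    (hUcard : 𝒰.ncard = N1)
    (hUcode : ∀ U1 ∈ 𝒰, ∀ U2 ∈ 𝒰, U1 ≠ U2 →
      d1 ≤ subspaceDist (rowSpace U1) (rowSpace U2))
    (ℳ : Submodule F (Matrix (Fin k) (Fin n2) F))
    (hMcard : Nat.card ℳ = N2)
    (hMrank : ∀ M ∈ ℳ, M ≠ 0 → d2 ≤ M.rank) :
    let C : Set (Submodule F (Fin (n1 + n2) → F)) :=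
      {X | ∃ U ∈ 𝒰, ∃ M ∈ ℳ, X = rowSpace (hcat U M)}
    C.ncard = N1 * N2 ∧
      (∀ X ∈ C, Module.finrank F ↥X = k) ∧
      (∀ X ∈ C, ∀ Y ∈ C, X ≠ Y → min d1 (2 * d2) ≤ subspaceDist X Y) := by

  intro C
  simp only [subspaceDist]
  -- injectivity of the construction
  have key : ∀ U1 ∈ 𝒰, ∀ U2 ∈ 𝒰, ∀ M1 M2 : Matrix (Fin k) (Fin n2) F,
      rowSpace (hcat U1 M1) = rowSpace (hcat U2 M2) → U1 = U2 ∧ M1 = M2 := by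
    intro U1 h1 U2 h2 M1 M2 h
    have hU : U1 = U2 := by
      by_contra hne
      exact hUinj U1 h1 U2 h2 hne (rowSpace_proj h)
    subst hU
    exact ⟨rfl, hcat_inj_right (hUrank U1 h1) h⟩
  have hCimg : C = (fun p : Matrix (Fin k) (Fin n1) F × Matrix (Fin k) (Fin n2) F =>
      rowSpace (hcat p.1 p.2)) '' (𝒰 ×ˢ (ℳ : Set (Matrix (Fin k) (Fin n2) F))) := by
    ext X
    simp only [C, Set.mem_setOf_eq, Set.mem_image, Set.mem_prod, SetLike.mem_coe, Prod.exists]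
    constructor
    · rintro ⟨U, hU, M, hM, rfl⟩; exact ⟨U, M, ⟨hU, hM⟩, rfl⟩
    · rintro ⟨U, M, ⟨hU, hM⟩, rfl⟩; exact ⟨U, hU, M, hM, rfl⟩
  refine ⟨?_, ?_, ?_⟩
  · rw [hCimg, Set.ncard_image_of_injOn, ← Nat.card_coe_set_eq]
    · rw [Nat.card_congr (Equiv.Set.prod _ _), Nat.card_prod,
        Nat.card_coe_set_eq, Nat.card_coe_set_eq, hUcard, ← hMcard]
      exact congrArg (N1 * ·) (Nat.card_coe_set_eq _).symm
    · rintro ⟨U1, M1⟩ ⟨h1, hm1⟩ ⟨U2, M2⟩ ⟨h2, hm2⟩ h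
      obtain ⟨hu, hm⟩ := key U1 h1 U2 h2 M1 M2 h
      exact Prod.ext hu hm
  · rintro X ⟨U, hU, M, hM, rfl⟩
    exact finrank_rowSpace_hcat (hUrank U hU) M
  · rintro X ⟨U1, h1, M1, hm1, rfl⟩ Y ⟨U2, h2, M2, hm2, rfl⟩ hne
    have hd1 : Module.finrank F ↥(rowSpace (hcat U1 M1)) = k :=
      finrank_rowSpace_hcat (hUrank U1 h1) M1
    have hd2 : Module.finrank F ↥(rowSpace (hcat U2 M2)) = k :=
      finrank_rowSpace_hcat (hUrank U2 h2) M2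
    rw [hd1, hd2]
    by_cases hU12 : U1 = U2
    · subst hU12
      have hM12 : M1 ≠ M2 := fun h => hne (by rw [h])
      have hDm : M2 - M1 ∈ ℳ := sub_mem hm2 hm1
      have hDne : M2 - M1 ≠ 0 := sub_ne_zero.mpr (fun h => hM12 h.symm)
      have hd2' : d2 ≤ (M2 - M1).rank := hMrank _ hDm hDne
      have hsup := sup_finrank_ge (hUrank U1 h1) M1 M2
      have : min d1 (2 * d2) ≤ 2 * d2 := min_le_right _ _
      omega
    · have hcode := hUcode U1 h1 U2 h2 hU12
      simp only [subspaceDist] at hcode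
      have hk1 : Module.finrank F ↥(rowSpace U1) = k := by
        rw [finrank_rowSpace]; exact hUrank U1 h1
      have hk2 : Module.finrank F ↥(rowSpace U2) = k := by
        rw [finrank_rowSpace]; exact hUrank U2 h2
      have hmap : Module.finrank F ↥(rowSpace U1 ⊔ rowSpace U2) ≤
          Module.finrank F ↥(rowSpace (hcat U1 M1) ⊔ rowSpace (hcat U2 M2)) := by
        rw [← map_proj1_rowSpace U1 M1, ← map_proj1_rowSpace U2 M2, ← Submodule.map_sup]
        exact Submodule.finrank_map_le _ _
      rw [hk1, hk2] at hcode
      have : min d1 (2 * d2) ≤ d1 := min_le_left _ _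
      omega
end

section
/- Let q be a prime power, U ∈ F_q^{k×n1} with rank(U) = k, M ∈ F_q^{k×n2}, and let δ be a nonnegative integer. If Y is a k-dimensional subspace of F_q^{n1+n2} such that the projection of Y onto the first n1 coordinates has dimension at most k − δ, then dim( im(U|M) + Y ) ≥ k + δ; consequently the subspace distance satisfies d_S( im(U|M), Y ) ≥ 2δ. -/
theorem statement4 (q k n1 n2 δ : ℕ) (hq : IsPrimePow q)
    (F : Type) [Field F] [Fintype F] (hcard : Fintype.card F = q)
    (U : Matrix (Fin k) (Fin n1) F) (hU : U.rank = k)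
    (M : Matrix (Fin k) (Fin n2) F)
    (Y : Submodule F (Fin (n1 + n2) → F))
    (hYdim : Module.finrank F ↥Y = k)
    (hYproj : (Module.finrank F ↥(Y.map (proj1 F n1 n2)) : ℤ) ≤ (k : ℤ) - (δ : ℤ)) :
    k + δ ≤ Module.finrank F ↥(rowSpace (hcat U M) ⊔ Y) ∧
      2 * δ ≤ subspaceDist (rowSpace (hcat U M)) Y := by

  classical
  set L : (Fin (n1+n2) → F) →ₗ[F] (Fin n1 → F) := proj1 F n1 n2 with hL
  set v : Fin k → (Fin (n1+n2) → F) := fun i => hcat U M i with hv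
  set R : Submodule F (Fin (n1+n2) → F) := rowSpace (hcat U M) with hR
  have hRv : R = Submodule.span F (Set.range v) := rfl
  have hUli : LinearIndependent F (fun i : Fin k => U i) := by
    rw [Matrix.rank_eq_finrank_span_row] at hU
    rw [linearIndependent_iff_card_eq_finrank_span]
    simp only [Set.finrank, Fintype.card_fin]; exact hU.symm
  have hLrow : ∀ i, L (v i) = U i := by
    intro i
    ext j
    simp [hL, hv, proj1, hcat, LinearMap.funLeft, Fin.append_left]
  have hli : LinearIndependent F v := by
    apply LinearIndependent.of_comp L
    have : ⇑L ∘ v = fun i => U i := funext hLrow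
    rw [this]; exact hUli
  have hRdim : Module.finrank F R = k := by
    rw [hRv]
    simpa using finrank_span_eq_card hli
  have hker : ∀ x ∈ R, L x = 0 → x = 0 := by
    intro x hx hLx
    rw [hRv] at hx
    obtain ⟨c, rfl⟩ := Submodule.mem_span_range_iff_exists_fun F |>.mp hx
    have h0 : ∑ i, c i • U i = 0 := by
      calc ∑ i, c i • U i = L (∑ i, c i • v i) := by
            simp [map_sum, hLrow]
        _ = 0 := hLx
    have hc : ∀ i, c i = 0 := Fintype.linearIndependent_iff.mp hUli c h0
    simp [hc]
  have hI : Module.finrank F ↥(R ⊓ Y) ≤ Module.finrank F ↥(Y.map L) := by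
    have hker' : LinearMap.ker (L.domRestrict (R ⊓ Y)) = ⊥ := by
      ext x
      simp only [LinearMap.mem_ker, LinearMap.domRestrict_apply, Submodule.mem_bot]
      constructor
      · intro h
        exact Subtype.ext (hker x.1 x.2.1 h)
      · rintro rfl; simp
    have h1 := LinearMap.finrank_range_add_finrank_ker (L.domRestrict (R ⊓ Y))
    rw [hker', finrank_bot, LinearMap.range_domRestrict] at h1
    rw [← h1]
    simpa using Submodule.finrank_mono (Submodule.map_mono (inf_le_right : R ⊓ Y ≤ Y))
  have hsum := Submodule.finrank_sup_add_finrank_inf_eq R Y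
  have hmain : k + δ ≤ Module.finrank F ↥(R ⊔ Y) := by
    have hδk : (δ:ℤ) ≤ k := by
      have : (0:ℤ) ≤ Module.finrank F ↥(Y.map L) := Int.ofNat_nonneg _
      omega
    zify at hsum hI ⊢
    omega
  refine ⟨hmain, ?_⟩
  unfold subspaceDist
  rw [hRdim, hYdim]
  omega
end
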